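/- Given an invertible Hermitian H ∈ ℍ^{n×n} and vectors e₁,…,e_m in ℍⁿ spanning a subspace V₁ with prescribed Gramian [eᵢ,eⱼ] that is zero for the first m₀ indices, there exist vectors ẽ₁,…,ẽ_{m₀} ∈ ℍⁿ with [ẽⱼ, eᵢ] = δᵢⱼ for all i = 1,…,m and [ẽₖ, ẽₖ] = 0 for k = 1,…,m₀. -/

import Mathlib

open Quaternion Matrix

/-- The indefinite inner product `[x,y] = y* H x` on `ℍⁿ`. -/
noncomputable def qform {n : ℕ} (H : Matrix (Fin n) (Fin n) ℍ[ℝ]) (x y : Fin n → ℍ[ℝ]) : ℍ[ℝ] :=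
  star y ⬝ᵥ (H *ᵥ x)

/-!
Since `H` is invertible and the `eᵢ` are independent over the division ring `ℍ`, there are
vectors `fⱼ` with `[fⱼ, eᵢ] = δᵢⱼ`: they come from the dual functionals of the `eᵢ`, every
right-linear functional on `ℍⁿ` being `y ↦ a ⬝ᵥ y`, so that `fⱼ = H⁻¹ (star aⱼ)`.
For `j < m₀` the vector `eⱼ` is isotropic and orthogonal to every `eᵢ`, so
`ẽⱼ = fⱼ - eⱼ · ½[fⱼ, fⱼ]` keeps the pairings with the `eᵢ`, and
`[ẽⱼ, ẽⱼ] = [fⱼ, fⱼ] - c - star c = 0` for the self-adjoint `c = ½[fⱼ, fⱼ]`.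
-/

theorem LinearIndependent.exists_dual_apply_eq_ite {K V ι : Type*} [DivisionRing K]
    [AddCommGroup V] [Module K V] [Fintype ι] [DecidableEq ι] {v : ι → V}
    (hv : LinearIndependent K v) :
    ∃ φ : ι → Module.Dual K V, ∀ i j, φ i (v j) = if i = j then 1 else 0 := by
  obtain ⟨g, hg⟩ := (Fintype.linearCombination K v).exists_leftInverse_of_injective
    (LinearMap.ker_eq_bot.mpr hv.fintypeLinearCombination_injective)
  refine ⟨fun i => (LinearMap.proj i).comp g, fun i j => ?_⟩
  have hgv : g (v j) = Pi.single j 1 := by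
    simpa [Fintype.linearCombination_apply_single] using LinearMap.congr_fun hg (Pi.single j 1)
  simp [hgv, Pi.single_apply]

theorem LinearMap.unop_apply_eq_dotProduct {R ι : Type*} [Semiring R] [Fintype ι]
    [DecidableEq ι] (φ : (ι → R) →ₗ[Rᵐᵒᵖ] Rᵐᵒᵖ) (y : ι → R) :
    (φ y).unop = (fun j => (φ (Pi.single j 1)).unop) ⬝ᵥ y := by
  have hy : y = ∑ j, MulOpposite.op (y j) • Pi.single j 1 := by
    ext k
    simp [Finset.sum_apply, Pi.single_apply]
  conv_lhs => rw [hy]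
  simp [dotProduct]

theorem LinearIndependent.exists_dotProduct_eq_ite {R ι κ : Type*} [DivisionRing R]
    [Fintype ι] [DecidableEq ι] [Fintype κ] [DecidableEq κ] {v : ι → κ → R}
    (hv : LinearIndependent Rᵐᵒᵖ v) :
    ∃ a : ι → κ → R, ∀ i j, a i ⬝ᵥ v j = if i = j then 1 else 0 := by
  obtain ⟨φ, hφ⟩ := hv.exists_dual_apply_eq_ite
  refine ⟨fun i j => (φ i (Pi.single j 1)).unop, fun i j => ?_⟩
  rw [← (φ i).unop_apply_eq_dotProduct, hφ]
  split_ifs <;> rfl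

section qform

variable {n : ℕ} (H : Matrix (Fin n) (Fin n) ℍ[ℝ])

theorem qform_sub_left (x y z : Fin n → ℍ[ℝ]) :
    qform H (x - y) z = qform H x z - qform H y z := by
  simp [qform, mulVec_sub, dotProduct_sub]

theorem qform_sub_right (x y z : Fin n → ℍ[ℝ]) :
    qform H x (y - z) = qform H x y - qform H x z := by
  simp [qform, sub_dotProduct]

theorem qform_op_smul_left (c : ℍ[ℝ]) (x y : Fin n → ℍ[ℝ]) :
    qform H (MulOpposite.op c • x) y = qform H x y * c := by
  simp [qform, dotProduct, mulVec, Finset.sum_mul, mul_assoc]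

theorem qform_op_smul_right (c : ℍ[ℝ]) (x y : Fin n → ℍ[ℝ]) :
    qform H x (MulOpposite.op c • y) = star c * qform H x y := by
  simp [qform, dotProduct, Finset.mul_sum, mul_assoc]

theorem star_qform {H : Matrix (Fin n) (Fin n) ℍ[ℝ]} (hH : H.IsHermitian) (x y : Fin n → ℍ[ℝ]) :
    star (qform H x y) = qform H y x := by
  rw [qform, qform, ← star_dotProduct_star, star_star, star_mulVec, ← dotProduct_mulVec,
    hH.eq]

theorem exists_qform_eq_ite {K : Matrix (Fin n) (Fin n) ℍ[ℝ]} (hK : H * K = 1) {m : ℕ}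
    {e : Fin m → Fin n → ℍ[ℝ]} (he : LinearIndependent ℍ[ℝ]ᵐᵒᵖ e) :
    ∃ f : Fin m → Fin n → ℍ[ℝ], ∀ k i, qform H (f k) (e i) = if i = k then 1 else 0 := by
  obtain ⟨a, ha⟩ := he.exists_dotProduct_eq_ite
  refine ⟨fun k => K *ᵥ star (a k), fun k i => ?_⟩
  rw [qform, mulVec_mulVec, hK, one_mulVec, star_dotProduct_star, ha]
  split_ifs <;> simp_all [eq_comm]

theorem qform_sub_half_self_eq_zero {H : Matrix (Fin n) (Fin n) ℍ[ℝ]} (hH : H.IsHermitian)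
    {x g : Fin n → ℍ[ℝ]} (hg : qform H g g = 0) (hxg : qform H x g = 1) :
    qform H (x - MulOpposite.op ((2⁻¹ : ℝ) • qform H x x) • g)
      (x - MulOpposite.op ((2⁻¹ : ℝ) • qform H x x) • g) = 0 := by
  have hgx : qform H g x = 1 := by rw [← star_qform hH, hxg, star_one]
  have hc : star ((2⁻¹ : ℝ) • qform H x x) = (2⁻¹ : ℝ) • qform H x x := by
    rw [Quaternion.star_smul, star_qform hH]
  simp only [qform_sub_left, qform_sub_right, qform_op_smul_left, qform_op_smul_right, hg, hgx,
    hxg, hc, one_mul, mul_one, zero_mul, sub_zero]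
  module

end qform

theorem stmt12_general {n m m₀ : ℕ} (hm : m₀ ≤ m)
    (H : Matrix (Fin n) (Fin n) ℍ[ℝ])
    (hH : H.IsHermitian) (hHinv : ∃ K, H * K = 1 ∧ K * H = 1)
    (e : Fin m → (Fin n → ℍ[ℝ]))
    (hind : LinearIndependent ℍ[ℝ]ᵐᵒᵖ e)
    (hoff : ∀ i j : Fin m, i ≠ j → qform H (e i) (e j) = 0)
    (hzero : ∀ i : Fin m, (i : ℕ) < m₀ → qform H (e i) (e i) = 0) :
    ∃ et : Fin m₀ → (Fin n → ℍ[ℝ]),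
      (∀ (j : Fin m₀) (i : Fin m),
        qform H (et j) (e i) = if (i : ℕ) = (j : ℕ) then 1 else 0) ∧
      (∀ k : Fin m₀, qform H (et k) (et k) = 0) := by
  obtain ⟨K, hK, -⟩ := hHinv
  obtain ⟨f, hf⟩ := exists_qform_eq_ite H hK hind
  have hiso : ∀ (j : Fin m₀) (i : Fin m), qform H (e (Fin.castLE hm j)) (e i) = 0 := by
    intro j i
    by_cases hij : Fin.castLE hm j = i
    · exact hij ▸ hzero _ j.isLt
    · exact hoff _ _ hij
  refine ⟨fun j => f (Fin.castLE hm j) -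
    MulOpposite.op ((2⁻¹ : ℝ) • qform H (f (Fin.castLE hm j)) (f (Fin.castLE hm j))) •
      e (Fin.castLE hm j), fun j i => ?_, fun k => qform_sub_half_self_eq_zero hH (hiso k _) ?_⟩
  · rw [qform_sub_left, qform_op_smul_left, hiso, zero_mul, sub_zero, hf]
    simp [Fin.ext_iff]
  · simp [hf]

theorem stmt12 {n m m₀ : ℕ} (hm : m₀ ≤ m)
    (H : Matrix (Fin n) (Fin n) ℍ[ℝ])
    (hH : H.IsHermitian) (hHinv : ∃ K, H * K = 1 ∧ K * H = 1)
    (e : Fin m → (Fin n → ℍ[ℝ]))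
    (hind : LinearIndependent ℍ[ℝ]ᵐᵒᵖ e)
    (hoff : ∀ i j : Fin m, i ≠ j → qform H (e i) (e j) = 0)
    (hzero : ∀ i : Fin m, (i : ℕ) < m₀ → qform H (e i) (e i) = 0)
    (hpm : ∀ i : Fin m, m₀ ≤ (i : ℕ) →
      qform H (e i) (e i) = 1 ∨ qform H (e i) (e i) = -1) :
    ∃ et : Fin m₀ → (Fin n → ℍ[ℝ]),
      (∀ (j : Fin m₀) (i : Fin m),
        qform H (et j) (e i) = if (i : ℕ) = (j : ℕ) then 1 else 0) ∧
      (∀ k : Fin m₀, qform H (et k) (et k) = 0) :=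
  stmt12_general hm H hH hHinv e hind hoff hzero
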